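/- In any ABA⁺ framework in which the empty set of assumptions is closed, there exists a <-preferred extension and an <-ideal extension. -/

import Mathlib

universe u

/-- An ABA framework: a deductive system `(ℒ, R)`, a nonempty set of assumptions,
and a total contrary map on assumptions (modelled as a total map on `ℒ`). -/
structure ABAF (L : Type u) where
  rules : Set (L × List L)
  asms : Set L
  asms_nonempty : asms.Nonempty
  contrary : L → L

namespace ABAF

variable {L : Type u}

/-- There is a deduction for `φ` supported by `S` (and rules of `F`):
a finite tree with root `φ`, leaves labelled by `⊤` or elements of `S`,
children of non-leaf nodes given by bodies of rules with matching heads. -/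
inductive Ded (F : ABAF L) (S : Set L) : L → Prop
  | assumption {φ : L} : φ ∈ S → Ded F S φ
  | rule {φ : L} {body : List L} : (φ, body) ∈ F.rules →
      (∀ ψ ∈ body, Ded F S ψ) → Ded F S φ

/-- The conclusions of `E`: all sentences deducible from subsets of `E`. -/
def cn (F : ABAF L) (E : Set L) : Set L := {φ | F.Ded E φ}

/-- The closure of `E`: all assumptions deducible from `E`. -/
def cl (F : ABAF L) (E : Set L) : Set L := F.cn E ∩ F.asms

/-- `E` is closed iff it coincides with its closure. -/
def Closed (F : ABAF L) (E : Set L) : Prop := F.cl E = E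

/-- `A` attacks `B` iff some `A' ⊆ A` supports a deduction of the contrary of some `β ∈ B`. -/
def Attacks (F : ABAF L) (A B : Set L) : Prop :=
  ∃ A' ⊆ A, ∃ β ∈ B, F.Ded A' (F.contrary β)

/-- A framework is flat iff every set of assumptions is closed. -/
def Flat (F : ABAF L) : Prop := ∀ E ⊆ F.asms, F.Closed E

def ConflictFree (F : ABAF L) (E : Set L) : Prop := ¬ F.Attacks E E

def Defends (F : ABAF L) (E A : Set L) : Prop :=
  ∀ B ⊆ F.asms, F.Closed B → F.Attacks B A → F.Attacks E B

def Admissible (F : ABAF L) (E : Set L) : Prop :=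
  E ⊆ F.asms ∧ F.Closed E ∧ F.ConflictFree E ∧ F.Defends E E

def Preferred (F : ABAF L) (E : Set L) : Prop :=
  F.Admissible E ∧ ∀ E', F.Admissible E' → E ⊆ E' → E' = E

def Complete (F : ABAF L) (E : Set L) : Prop :=
  F.Admissible E ∧ ∀ A ⊆ F.asms, F.Defends E A → A ⊆ E

def Stable (F : ABAF L) (E : Set L) : Prop :=
  E ⊆ F.asms ∧ F.Closed E ∧ F.ConflictFree E ∧
    ∀ β ∈ F.asms, β ∉ E → F.Attacks E {β}

def WellFounded (F : ABAF L) (E : Set L) : Prop :=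
  E = ⋂₀ {E' | F.Complete E'}

def Ideal (F : ABAF L) (E : Set L) : Prop :=
  (F.Admissible E ∧ ∀ P, F.Preferred P → E ⊆ P) ∧
    ∀ E', (F.Admissible E' ∧ ∀ P, F.Preferred P → E' ⊆ P) → E ⊆ E' → E' = E

end ABAF

/-- An ABA⁺ framework: an ABA framework with a transitive preference relation on assumptions. -/
structure ABAPlus (L : Type u) extends ABAF L where
  le : L → L → Prop
  le_trans : ∀ a b c, le a b → le b c → le a c

namespace ABAPlus

variable {L : Type u}

/-- The strict counterpart of the preference relation. -/
def lt (F : ABAPlus L) (a b : L) : Prop := F.le a b ∧ ¬ F.le b a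

/-- `A` <-attacks `B`: either a normal attack (a deduction from `A' ⊆ A` of the contrary of
some `β ∈ B` with no supporting assumption strictly less preferred than `β`),
or a reverse attack (a deduction from `B' ⊆ B` of the contrary of some `α ∈ A` using
some assumption strictly less preferred than `α`). -/
def LtAttacks (F : ABAPlus L) (A B : Set L) : Prop :=
  (∃ A' ⊆ A, ∃ β ∈ B, F.toABAF.Ded A' (F.contrary β) ∧ ∀ α' ∈ A', ¬ F.lt α' β) ∨
  (∃ B' ⊆ B, ∃ α ∈ A, F.toABAF.Ded B' (F.contrary α) ∧ ∃ β' ∈ B', F.lt β' α)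

def LtConflictFree (F : ABAPlus L) (E : Set L) : Prop := ¬ F.LtAttacks E E

def LtDefends (F : ABAPlus L) (E A : Set L) : Prop :=
  ∀ B ⊆ F.asms, F.toABAF.Closed B → F.LtAttacks B A → F.LtAttacks E B

def LtAdmissible (F : ABAPlus L) (E : Set L) : Prop :=
  E ⊆ F.asms ∧ F.toABAF.Closed E ∧ F.LtConflictFree E ∧ F.LtDefends E E

def LtPreferred (F : ABAPlus L) (E : Set L) : Prop :=
  F.LtAdmissible E ∧ ∀ E', F.LtAdmissible E' → E ⊆ E' → E' = E

def LtComplete (F : ABAPlus L) (E : Set L) : Prop :=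
  F.LtAdmissible E ∧ ∀ A ⊆ F.asms, F.LtDefends E A → A ⊆ E

def LtStable (F : ABAPlus L) (E : Set L) : Prop :=
  E ⊆ F.asms ∧ F.toABAF.Closed E ∧ F.LtConflictFree E ∧
    ∀ β ∈ F.asms, β ∉ E → F.LtAttacks E {β}

def LtWellFounded (F : ABAPlus L) (E : Set L) : Prop :=
  E = ⋂₀ {E' | F.LtComplete E'}

def LtIdeal (F : ABAPlus L) (E : Set L) : Prop :=
  (F.LtAdmissible E ∧ ∀ P, F.LtPreferred P → E ⊆ P) ∧
    ∀ E', (F.LtAdmissible E' ∧ ∀ P, F.LtPreferred P → E' ⊆ P) → E ⊆ E' → E' = E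

/-- The Axiom of Weak Contraposition. -/
def WCP (F : ABAPlus L) : Prop :=
  ∀ A ⊆ F.asms, ∀ β ∈ F.asms,
    F.toABAF.Ded A (F.contrary β) → (∃ α' ∈ A, F.lt α' β) →
    ∃ α ∈ A, F.lt α β ∧ (∀ α'' ∈ A, F.lt α'' β → ¬ F.lt α'' α) ∧
      ∃ Aα ⊆ (A \ {α}) ∪ {β}, F.toABAF.Ded Aα (F.contrary α)

end ABAPlus

/-!
Deductions are finite trees, so every <-attack is already an attack between finite subsets,
and every finite subset of the union of a chain lies in a single member of it. Hence the union
of a chain of <-admissible sets is <-admissible, and Zorn's lemma, started at the closed empty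
set, yields ⊆-maximal <-admissible subsets of any given set: of all of `ℒ` (a
<-preferred extension) and of the intersection of all <-preferred extensions (an <-ideal one).
-/

namespace ABAF

variable {L : Type u} {F : ABAF L}

theorem Ded.mono {S T : Set L} (hST : S ⊆ T) {φ : L} (h : F.Ded S φ) : F.Ded T φ := by
  induction h with
  | assumption hφ => exact .assumption (hST hφ)
  | rule hr _ ih => exact .rule hr ih

theorem Ded.exists_finite_subset {S : Set L} {φ : L} (h : F.Ded S φ) :
    ∃ T ⊆ S, T.Finite ∧ F.Ded T φ := by
  induction h with
  | @assumption φ hφ =>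
    exact ⟨{φ}, Set.singleton_subset_iff.2 hφ, Set.finite_singleton φ, .assumption rfl⟩
  | @rule φ body hr _ ih =>
    choose T hTS hTfin hTd using ih
    refine ⟨⋃ (ψ) (hψ : ψ ∈ body), T ψ hψ, Set.iUnion₂_subset hTS,
      (List.finite_toSet body).biUnion' hTfin, .rule hr fun ψ hψ => (hTd ψ hψ).mono ?_⟩
    exact fun x hx => Set.mem_iUnion₂.2 ⟨ψ, hψ, hx⟩

theorem closed_sUnion {c : Set (Set L)} (hne : c.Nonempty) (hc : DirectedOn (· ⊆ ·) c)
    (hasms : ∀ E ∈ c, E ⊆ F.asms) (hclosed : ∀ E ∈ c, F.Closed E) : F.Closed (⋃₀ c) := by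
  refine Set.Subset.antisymm ?_ fun x hx => ⟨.assumption hx, Set.sUnion_subset hasms hx⟩
  rintro x ⟨hx, hxasms⟩
  obtain ⟨T, hTc, hTfin, hxT⟩ := Ded.exists_finite_subset hx
  obtain ⟨E, hE, hTE⟩ := hc.exists_mem_subset_of_finite_of_subset_sUnion hne hTfin hTc
  have hxE : x ∈ F.cl E := ⟨hxT.mono hTE, hxasms⟩
  rw [hclosed E hE] at hxE
  exact Set.mem_sUnion_of_mem hxE hE

end ABAF

namespace ABAPlus

variable {L : Type u} {F : ABAPlus L}

theorem LtAttacks.mono {A A' B B' : Set L} (hA : A ⊆ A') (hB : B ⊆ B')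
    (h : F.LtAttacks A B) : F.LtAttacks A' B' := by
  rcases h with ⟨S, hS, β, hβ, hd, hlt⟩ | ⟨S, hS, α, hα, hd, hlt⟩
  · exact .inl ⟨S, hS.trans hA, β, hB hβ, hd, hlt⟩
  · exact .inr ⟨S, hS.trans hB, α, hA hα, hd, hlt⟩

theorem LtAttacks.exists_finite {A B : Set L} (h : F.LtAttacks A B) :
    ∃ A₀ ⊆ A, ∃ B₀ ⊆ B, A₀.Finite ∧ B₀.Finite ∧ F.LtAttacks A₀ B₀ := by
  rcases h with ⟨S, hS, β, hβ, hd, hlt⟩ | ⟨S, hS, α, hα, hd, β', hβ', hβ'α⟩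
  · obtain ⟨T, hTS, hTfin, hTd⟩ := hd.exists_finite_subset
    exact ⟨T, hTS.trans hS, {β}, Set.singleton_subset_iff.2 hβ, hTfin, Set.finite_singleton β,
      .inl ⟨T, subset_rfl, β, rfl, hTd, fun α hα => hlt α (hTS hα)⟩⟩
  · obtain ⟨T, hTS, hTfin, hTd⟩ := hd.exists_finite_subset
    exact ⟨{α}, Set.singleton_subset_iff.2 hα, insert β' T,
      Set.insert_subset (hS hβ') (hTS.trans hS), Set.finite_singleton α, hTfin.insert β',
      .inr ⟨insert β' T, subset_rfl, α, rfl, hTd.mono (Set.subset_insert β' T),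
        β', Set.mem_insert β' T, hβ'α⟩⟩

theorem exists_mem_ltAttacks_of_ltAttacks_sUnion {c : Set (Set L)} (hne : c.Nonempty)
    (hc : DirectedOn (· ⊆ ·) c) {A : Set L} (h : F.LtAttacks A (⋃₀ c)) :
    ∃ E ∈ c, F.LtAttacks A E := by
  obtain ⟨A₀, hA₀, B₀, hB₀, -, hB₀fin, h₀⟩ := h.exists_finite
  obtain ⟨E, hE, hB₀E⟩ := hc.exists_mem_subset_of_finite_of_subset_sUnion hne hB₀fin hB₀
  exact ⟨E, hE, h₀.mono hA₀ hB₀E⟩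

theorem exists_mem_ltAttacks_self_of_ltAttacks_sUnion {c : Set (Set L)} (hne : c.Nonempty)
    (hc : DirectedOn (· ⊆ ·) c) (h : F.LtAttacks (⋃₀ c) (⋃₀ c)) : ∃ E ∈ c, F.LtAttacks E E := by
  obtain ⟨A₀, hA₀, B₀, hB₀, hA₀fin, hB₀fin, h₀⟩ := h.exists_finite
  obtain ⟨E, hE, hE₀⟩ := hc.exists_mem_subset_of_finite_of_subset_sUnion hne
    (hA₀fin.union hB₀fin) (Set.union_subset hA₀ hB₀)
  exact ⟨E, hE, h₀.mono (Set.subset_union_left.trans hE₀) (Set.subset_union_right.trans hE₀)⟩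

theorem ltAdmissible_sUnion {c : Set (Set L)} (hne : c.Nonempty) (hc : DirectedOn (· ⊆ ·) c)
    (hadm : ∀ E ∈ c, F.LtAdmissible E) : F.LtAdmissible (⋃₀ c) := by
  refine ⟨Set.sUnion_subset fun E hE => (hadm E hE).1,
    ABAF.closed_sUnion hne hc (fun E hE => (hadm E hE).1) (fun E hE => (hadm E hE).2.1),
    fun h => ?_, fun B hB hBclosed h => ?_⟩
  · obtain ⟨E, hE, hEE⟩ := exists_mem_ltAttacks_self_of_ltAttacks_sUnion hne hc h
    exact (hadm E hE).2.2.1 hEE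
  · obtain ⟨E, hE, hBE⟩ := exists_mem_ltAttacks_of_ltAttacks_sUnion hne hc h
    exact ((hadm E hE).2.2.2 B hB hBclosed hBE).mono (Set.subset_sUnion_of_mem hE) subset_rfl

theorem ltAdmissible_empty (h : F.toABAF.Closed ∅) : F.LtAdmissible ∅ := by
  refine ⟨Set.empty_subset _, h, ?_, ?_⟩
  · rintro (⟨_, _, _, hβ, _⟩ | ⟨_, _, _, hα, _⟩)
    exacts [hβ, hα]
  · rintro B - - (⟨_, _, _, hβ, _⟩ | ⟨_, hS, _, _, _, _, hβ', _⟩)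
    exacts [hβ.elim, (hS hβ').elim]

theorem exists_maximal_ltAdmissible_subset (h : F.toABAF.Closed ∅) (U : Set L) :
    ∃ E, Maximal (fun E => F.LtAdmissible E ∧ E ⊆ U) E := by
  obtain ⟨E, -, hE⟩ := zorn_subset_nonempty {E | F.LtAdmissible E ∧ E ⊆ U}
    (fun c hcS hc hne => ⟨⋃₀ c,
      ⟨ltAdmissible_sUnion hne hc.directedOn fun E hE => (hcS hE).1,
        Set.sUnion_subset fun E hE => (hcS hE).2⟩,
      fun _ => Set.subset_sUnion_of_mem⟩)
    ∅ ⟨ltAdmissible_empty h, Set.empty_subset U⟩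
  exact ⟨E, hE⟩

end ABAPlus

/-- If the empty set of assumptions is closed, then there exists a
<-preferred extension and an <-ideal extension. -/
theorem ABAPlus.exists_ltPreferred_and_ltIdeal {L : Type u} (F : ABAPlus L)
    (h : F.toABAF.Closed ∅) :
    (∃ E, F.LtPreferred E) ∧ (∃ E, F.LtIdeal E) := by
  obtain ⟨P, hP⟩ := exists_maximal_ltAdmissible_subset h Set.univ
  obtain ⟨I, hI⟩ := exists_maximal_ltAdmissible_subset h (⋂₀ {P | F.LtPreferred P})
  refine ⟨⟨P, hP.prop.1, fun E hE hPE => (hP.eq_of_subset ⟨hE, Set.subset_univ E⟩ hPE).symm⟩,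
    ⟨I, ⟨hI.prop.1, Set.subset_sInter_iff.1 hI.prop.2⟩, fun E hE hIE => ?_⟩⟩
  exact (hI.eq_of_subset ⟨hE.1, Set.subset_sInter_iff.2 hE.2⟩ hIE).symm
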